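/- arXiv:math/0304305 — 3 statements merged into one kernel-verified Lean document; each statement's English description precedes it below -/
import Mathlib

section
/- The group presented by ⟨x, y | x⁻¹ y² x = y³, x² = y x y⟩ is the trivial group. -/
/-- The generator `x` of the free group on two generators. -/
def x : FreeGroup Bool := FreeGroup.of true

/-- The generator `y` of the free group on two generators. -/
def y : FreeGroup Bool := FreeGroup.of false

/-! Put `c = x⁻¹ y x`. The first relation says `c² = y³`, and together with the second,
`c³ = x⁻² y² x² = (y x y)⁻¹ y² (y x y) = y⁻¹ (x⁻¹ y² x) y = y³` as well. Hence `c = 1`, so `y = 1`,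
and then `x² = x` gives `x = 1`. -/

theorem Group.eq_one_of_inv_mul_sq_mul_eq_cube_of_sq_eq {G : Type*} [Group G] {a b : G}
    (h₁ : a⁻¹ * b ^ 2 * a = b ^ 3) (h₂ : a ^ 2 = b * a * b) : a = 1 ∧ b = 1 := by
  set c := a⁻¹ * b * a
  have hc_pow (n : ℕ) : c ^ n = a⁻¹ * b ^ n * a := by simpa using conj_pow (a := a⁻¹) (b := b)
  have hc_sq : c ^ 2 = b ^ 3 := by rw [hc_pow, h₁]
  have hc_cube : c ^ 3 = b ^ 3 :=
    calc c ^ 3 = (a ^ 2)⁻¹ * b ^ 2 * a ^ 2 := by rw [hc_pow, ← h₁, sq a]; group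
      _ = b⁻¹ * (a⁻¹ * b ^ 2 * a) * b := by rw [h₂]; group
      _ = b ^ 3 := by rw [h₁]; group
  have hc_one : c = 1 := by
    rwa [← hc_sq, pow_succ, mul_eq_left] at hc_cube
  have hb : b = 1 := by
    rwa [mul_eq_one_iff_eq_inv, inv_mul_eq_iff_eq_mul, mul_inv_cancel] at hc_one
  refine ⟨?_, hb⟩
  rwa [hb, mul_one, one_mul, pow_two, mul_eq_left] at h₂

theorem PresentedGroup.subsingleton_of_forall_of_eq_one {α : Type*} {rels : Set (FreeGroup α)}
    (h : ∀ i : α, (PresentedGroup.of i : PresentedGroup rels) = 1) :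
    Subsingleton (PresentedGroup rels) := by
  have hid : MonoidHom.id (PresentedGroup rels) = 1 := PresentedGroup.ext h
  exact subsingleton_of_forall_eq 1 fun g => DFunLike.congr_fun hid g

/-- The group ⟨x, y | x⁻¹ y² x = y³, x² = y x y⟩ is trivial. -/
theorem presentedGroup_trivial_6 :
    Subsingleton (PresentedGroup ({x⁻¹ * y ^ 2 * x * (y ^ 3)⁻¹, x ^ 2 * (y * x * y)⁻¹} :
      Set (FreeGroup Bool))) := by
  set rels : Set (FreeGroup Bool) := {x⁻¹ * y ^ 2 * x * (y ^ 3)⁻¹, x ^ 2 * (y * x * y)⁻¹}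
  have h₁ := PresentedGroup.mk_eq_mk_of_mul_inv_mem (rels := rels) (Set.mem_insert _ _)
  have h₂ := PresentedGroup.mk_eq_mk_of_mul_inv_mem (rels := rels) (Set.mem_insert_of_mem _ rfl)
  simp only [map_mul, map_inv, map_pow] at h₁ h₂
  obtain ⟨hx, hy⟩ := Group.eq_one_of_inv_mul_sq_mul_eq_cube_of_sq_eq h₁ h₂
  refine PresentedGroup.subsingleton_of_forall_of_eq_one fun i => ?_
  cases i
  exacts [hy, hx]
end

section
/- The group presented by ⟨x, y | x⁻¹ y² x = y³, x² = y x y⁻¹⟩ is the trivial group. -/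
section

variable {G : Type*} [Group G] {a b : G}

theorem pow_conj_eq_pow_two_pow (h : b * a * b⁻¹ = a ^ 2) (k : ℕ) :
    b ^ k * a * (b ^ k)⁻¹ = a ^ 2 ^ k := by
  induction k with
  | zero => simp
  | succ k ih =>
    calc b ^ (k + 1) * a * (b ^ (k + 1))⁻¹ = b * (b ^ k * a * (b ^ k)⁻¹) * b⁻¹ := by group
      _ = (b * a * b⁻¹) ^ 2 ^ k := by rw [ih, conj_pow]
      _ = a ^ 2 ^ (k + 1) := by rw [h, ← pow_mul, pow_succ']

theorem eq_one_of_inv_mul_sq_mul_eq_cube_of_sq_eq_conj (h₁ : a⁻¹ * b ^ 2 * a = b ^ 3)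
    (h₂ : a ^ 2 = b * a * b⁻¹) : a = 1 ∧ b = 1 := by
  have hconj := pow_conj_eq_pow_two_pow h₂.symm
  have hb2 : b ^ 2 = a * b ^ 3 * a⁻¹ := by rw [← h₁]; group
  have ha4 : a ^ 4 = 1 := by
    have : a ^ 4 = a ^ 4 * a ^ 4 :=
      calc a ^ 4 = b ^ 2 * a * (b ^ 2)⁻¹ := (hconj 2).symm
        _ = a * (b ^ 3 * a * (b ^ 3)⁻¹) * a⁻¹ := by rw [hb2]; group
        _ = a ^ 4 * a ^ 4 := by rw [hconj 3]; group
    exact left_eq_mul.mp this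
  have ha : a = 1 := by
    have : b ^ 2 * a * (b ^ 2)⁻¹ = 1 := (hconj 2).trans ha4
    rwa [mul_inv_eq_one, mul_eq_left] at this
  subst ha
  have : b ^ 2 = b ^ 2 * b := by simpa [← pow_succ] using h₁
  exact ⟨rfl, left_eq_mul.mp this⟩

end

/-- The group ⟨x, y | x⁻¹ y² x = y³, x² = y x y⁻¹⟩ is trivial. -/
theorem presentedGroup_trivial_8 :
    Subsingleton (PresentedGroup ({x⁻¹ * y ^ 2 * x * (y ^ 3)⁻¹, x ^ 2 * (y * x * y⁻¹)⁻¹} :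
      Set (FreeGroup Bool))) := by
  set rels : Set (FreeGroup Bool) := {x⁻¹ * y ^ 2 * x * (y ^ 3)⁻¹, x ^ 2 * (y * x * y⁻¹)⁻¹}
  have h₁ := PresentedGroup.one_of_mem (rels := rels) (Set.mem_insert _ _)
  have h₂ := PresentedGroup.one_of_mem (rels := rels) (Set.mem_insert_of_mem _ rfl)
  simp only [map_mul, map_inv, map_pow, mul_inv_eq_one] at h₁ h₂
  obtain ⟨hx, hy⟩ := eq_one_of_inv_mul_sq_mul_eq_cube_of_sq_eq_conj h₁ h₂
  refine PresentedGroup.subsingleton_of_forall_of_eq_one ?_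
  rintro (_ | _)
  exacts [hy, hx]
end

section
/- The group presented by ⟨x, y | x² = y³, x y x = y x y⟩ is AC-equivalent to the standard presentation; in particular, the tuple (x²y⁻³, xyx y⁻¹x⁻¹y⁻¹) is AC-equivalent to the tuple (x, y) in the free group F(x,y). -/
set_option linter.unreachableTactic false
set_option linter.unusedTactic false



/-- An elementary AC-transformation of an `n`-tuple of elements of the free group:
(AC1) replace `w i` by `w i * w j` with `j ≠ i`;
(AC2) replace `w i` by `(w i)⁻¹`;
(AC3) replace `w i` by `f * w i * f⁻¹`;
leaving all other entries fixed. -/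
def ACStep {α : Type} {n : ℕ} (V W : Fin n → FreeGroup α) : Prop :=
  ∃ i : Fin n,
    ((∃ j : Fin n, j ≠ i ∧ W i = V i * V j) ∨
      (W i = (V i)⁻¹) ∨
      (∃ f : FreeGroup α, W i = f * V i * f⁻¹)) ∧
    ∀ k : Fin n, k ≠ i → W k = V k

/-- AC-equivalence: a finite sequence of elementary AC-transformations. -/
def ACEquiv {α : Type} {n : ℕ} (V W : Fin n → FreeGroup α) : Prop :=
  Relation.ReflTransGen ACStep V W

section helpers

variable {α : Type} (a b c : FreeGroup α)

private lemma aux_other0 (k : Fin 2) (hk : k ≠ 0) :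
    (![c, b] : Fin 2 → FreeGroup α) k = ![a, b] k := by
  fin_cases k
  · exact absurd rfl hk
  · rfl

private lemma aux_other1 (k : Fin 2) (hk : k ≠ 1) :
    (![a, c] : Fin 2 → FreeGroup α) k = ![a, b] k := by
  fin_cases k
  · rfl
  · exact absurd rfl hk

private lemma acmul0 (h : c = a * b) : ACStep ![a, b] ![c, b] :=
  ⟨0, Or.inl ⟨1, by decide, by simpa using h⟩, aux_other0 a b c⟩

private lemma acmul1 (h : c = b * a) : ACStep ![a, b] ![a, c] :=
  ⟨1, Or.inl ⟨0, by decide, by simpa using h⟩, aux_other1 a b c⟩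

private lemma acinv0 (h : c = a⁻¹) : ACStep ![a, b] ![c, b] :=
  ⟨0, Or.inr (Or.inl (by simpa using h)), aux_other0 a b c⟩

private lemma acinv1 (h : c = b⁻¹) : ACStep ![a, b] ![a, c] :=
  ⟨1, Or.inr (Or.inl (by simpa using h)), aux_other1 a b c⟩

private lemma acconj0 (f : FreeGroup α) (h : c = f * a * f⁻¹) :
    ACStep ![a, b] ![c, b] :=
  ⟨0, Or.inr (Or.inr ⟨f, by simpa using h⟩), aux_other0 a b c⟩

private lemma acconj1 (f : FreeGroup α) (h : c = f * b * f⁻¹) :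
    ACStep ![a, b] ![a, c] :=
  ⟨1, Or.inr (Or.inr ⟨f, by simpa using h⟩), aux_other1 a b c⟩

end helpers

/-- The presentation ⟨x, y | x² = y³, x y x = y x y⟩ of the trivial group is
AC-equivalent to the standard presentation: the tuple of relators is
AC-equivalent to the tuple (x, y) of generators. -/
theorem acEquiv_AK2_standard :
    ACEquiv
      ![(FreeGroup.of true) ^ 2 * ((FreeGroup.of false) ^ 3)⁻¹,
        FreeGroup.of true * FreeGroup.of false * FreeGroup.of true *
          (FreeGroup.of false * FreeGroup.of true * FreeGroup.of false)⁻¹]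
      ![FreeGroup.of true, FreeGroup.of false] := by
  set x := FreeGroup.of true
  set y := FreeGroup.of false
  refine Relation.ReflTransGen.head (b := ![y * y * y * x⁻¹ * x⁻¹, x * y * x * y⁻¹ * x⁻¹ * y⁻¹]) (acinv0 _ _ _ (by (try rw [show x ^ 2 = x * x from by rw [pow_succ, pow_one], show y ^ 3 = y * y * y from by rw [pow_succ, pow_succ, pow_one]]); try simp [mul_inv_rev, mul_assoc]; try group)) ?_
  refine Relation.ReflTransGen.head (b := ![x⁻¹ * y * y * y * x⁻¹, x * y * x * y⁻¹ * x⁻¹ * y⁻¹]) (acconj0 _ _ _ (x⁻¹) (by (try rw [show x ^ 2 = x * x from by rw [pow_succ, pow_one], show y ^ 3 = y * y * y from by rw [pow_succ, pow_succ, pow_one]]); try simp [mul_inv_rev, mul_assoc]; try group)) ?_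
  refine Relation.ReflTransGen.head (b := ![x⁻¹ * y * y * y * x⁻¹, y * x * y⁻¹ * x⁻¹ * y⁻¹ * x]) (acconj1 _ _ _ (x⁻¹) (by (try rw [show x ^ 2 = x * x from by rw [pow_succ, pow_one], show y ^ 3 = y * y * y from by rw [pow_succ, pow_succ, pow_one]]); try simp [mul_inv_rev, mul_assoc]; try group)) ?_
  refine Relation.ReflTransGen.head (b := ![x⁻¹ * y * y * y * x⁻¹, y * x * y⁻¹ * x⁻¹ * y * y * x⁻¹]) (acmul1 _ _ _ (by (try rw [show x ^ 2 = x * x from by rw [pow_succ, pow_one], show y ^ 3 = y * y * y from by rw [pow_succ, pow_succ, pow_one]]); try simp [mul_inv_rev, mul_assoc]; try group)) ?_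
  refine Relation.ReflTransGen.head (b := ![x⁻¹ * y * y * y * x⁻¹, x * y⁻¹ * x⁻¹ * y * y * x⁻¹ * y]) (acconj1 _ _ _ (y⁻¹) (by (try rw [show x ^ 2 = x * x from by rw [pow_succ, pow_one], show y ^ 3 = y * y * y from by rw [pow_succ, pow_succ, pow_one]]); try simp [mul_inv_rev, mul_assoc]; try group)) ?_
  refine Relation.ReflTransGen.head (b := ![x⁻¹ * y * y * x⁻¹ * y * y * x⁻¹ * y, x * y⁻¹ * x⁻¹ * y * y * x⁻¹ * y]) (acmul0 _ _ _ (by (try rw [show x ^ 2 = x * x from by rw [pow_succ, pow_one], show y ^ 3 = y * y * y from by rw [pow_succ, pow_succ, pow_one]]); try simp [mul_inv_rev, mul_assoc]; try group)) ?_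
  refine Relation.ReflTransGen.head (b := ![y⁻¹ * x * y⁻¹ * y⁻¹ * x * y⁻¹ * y⁻¹ * x, x * y⁻¹ * x⁻¹ * y * y * x⁻¹ * y]) (acinv0 _ _ _ (by (try rw [show x ^ 2 = x * x from by rw [pow_succ, pow_one], show y ^ 3 = y * y * y from by rw [pow_succ, pow_succ, pow_one]]); try simp [mul_inv_rev, mul_assoc]; try group)) ?_
  refine Relation.ReflTransGen.head (b := ![y⁻¹ * x * y⁻¹ * y⁻¹ * x * y⁻¹ * y⁻¹ * x, y⁻¹ * x⁻¹ * y * y * x⁻¹ * y * x]) (acconj1 _ _ _ (x⁻¹) (by (try rw [show x ^ 2 = x * x from by rw [pow_succ, pow_one], show y ^ 3 = y * y * y from by rw [pow_succ, pow_succ, pow_one]]); try simp [mul_inv_rev, mul_assoc]; try group)) ?_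
  refine Relation.ReflTransGen.head (b := ![y⁻¹ * x * y⁻¹ * y⁻¹ * x * y⁻¹ * y⁻¹ * x, x⁻¹ * y * y * x⁻¹ * y * x * y⁻¹]) (acconj1 _ _ _ (y) (by (try rw [show x ^ 2 = x * x from by rw [pow_succ, pow_one], show y ^ 3 = y * y * y from by rw [pow_succ, pow_succ, pow_one]]); try simp [mul_inv_rev, mul_assoc]; try group)) ?_
  refine Relation.ReflTransGen.head (b := ![y⁻¹ * x * y⁻¹ * x * y⁻¹, x⁻¹ * y * y * x⁻¹ * y * x * y⁻¹]) (acmul0 _ _ _ (by (try rw [show x ^ 2 = x * x from by rw [pow_succ, pow_one], show y ^ 3 = y * y * y from by rw [pow_succ, pow_succ, pow_one]]); try simp [mul_inv_rev, mul_assoc]; try group)) ?_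
  refine Relation.ReflTransGen.head (b := ![y * x⁻¹ * y * x⁻¹ * y, x⁻¹ * y * y * x⁻¹ * y * x * y⁻¹]) (acinv0 _ _ _ (by (try rw [show x ^ 2 = x * x from by rw [pow_succ, pow_one], show y ^ 3 = y * y * y from by rw [pow_succ, pow_succ, pow_one]]); try simp [mul_inv_rev, mul_assoc]; try group)) ?_
  refine Relation.ReflTransGen.head (b := ![y * x⁻¹ * y * x⁻¹ * y, x⁻¹ * y * y * x⁻¹ * y * y * x⁻¹ * y]) (acmul1 _ _ _ (by (try rw [show x ^ 2 = x * x from by rw [pow_succ, pow_one], show y ^ 3 = y * y * y from by rw [pow_succ, pow_succ, pow_one]]); try simp [mul_inv_rev, mul_assoc]; try group)) ?_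
  refine Relation.ReflTransGen.head (b := ![y⁻¹ * x * y⁻¹ * x * y⁻¹, x⁻¹ * y * y * x⁻¹ * y * y * x⁻¹ * y]) (acinv0 _ _ _ (by (try rw [show x ^ 2 = x * x from by rw [pow_succ, pow_one], show y ^ 3 = y * y * y from by rw [pow_succ, pow_succ, pow_one]]); try simp [mul_inv_rev, mul_assoc]; try group)) ?_
  refine Relation.ReflTransGen.head (b := ![x * y⁻¹ * x * y⁻¹ * y⁻¹, x⁻¹ * y * y * x⁻¹ * y * y * x⁻¹ * y]) (acconj0 _ _ _ (y) (by (try rw [show x ^ 2 = x * x from by rw [pow_succ, pow_one], show y ^ 3 = y * y * y from by rw [pow_succ, pow_succ, pow_one]]); try simp [mul_inv_rev, mul_assoc]; try group)) ?_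
  refine Relation.ReflTransGen.head (b := ![x * y⁻¹ * x * y⁻¹ * y⁻¹, y * y * x⁻¹ * y * y * x⁻¹ * y * x⁻¹]) (acconj1 _ _ _ (x) (by (try rw [show x ^ 2 = x * x from by rw [pow_succ, pow_one], show y ^ 3 = y * y * y from by rw [pow_succ, pow_succ, pow_one]]); try simp [mul_inv_rev, mul_assoc]; try group)) ?_
  refine Relation.ReflTransGen.head (b := ![x * y⁻¹ * x * y⁻¹ * y⁻¹, y * y * x⁻¹]) (acmul1 _ _ _ (by (try rw [show x ^ 2 = x * x from by rw [pow_succ, pow_one], show y ^ 3 = y * y * y from by rw [pow_succ, pow_succ, pow_one]]); try simp [mul_inv_rev, mul_assoc]; try group)) ?_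
  refine Relation.ReflTransGen.head (b := ![x * y⁻¹, y * y * x⁻¹]) (acmul0 _ _ _ (by (try rw [show x ^ 2 = x * x from by rw [pow_succ, pow_one], show y ^ 3 = y * y * y from by rw [pow_succ, pow_succ, pow_one]]); try simp [mul_inv_rev, mul_assoc]; try group)) ?_
  refine Relation.ReflTransGen.head (b := ![x * y⁻¹, y]) (acmul1 _ _ _ (by (try rw [show x ^ 2 = x * x from by rw [pow_succ, pow_one], show y ^ 3 = y * y * y from by rw [pow_succ, pow_succ, pow_one]]); try simp [mul_inv_rev, mul_assoc]; try group)) ?_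
  refine Relation.ReflTransGen.head (b := ![x, y]) (acmul0 _ _ _ (by (try rw [show x ^ 2 = x * x from by rw [pow_succ, pow_one], show y ^ 3 = y * y * y from by rw [pow_succ, pow_succ, pow_one]]); try simp [mul_inv_rev, mul_assoc]; try group)) ?_
  exact Relation.ReflTransGen.refl
end
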